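/- arXiv:2504.00136 — 2 statements merged into one kernel-verified Lean document; each statement's English description precedes it below -/
import Mathlib

section
/- Assume Ŷ and Ẑ are linearly independent. Then q₂ = (‖Ŷ‖Ẑ − ‖Ẑ‖Ŷ)/‖‖Ŷ‖Ẑ − ‖Ẑ‖Ŷ‖ is a unit vector and is an eigenvector of A with eigenvalue s₂ = ⟨y, z⟩ + (‖Ŷ‖‖Ẑ‖ − ⟨Ŷ, Ẑ⟩)/2, i.e., A q₂ = s₂ q₂. -/
open Matrix

noncomputable def euclNorm {n : ℕ} (v : Fin n → ℝ) : ℝ := Real.sqrt (v ⬝ᵥ v)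

lemma dotProduct_self_nonneg' {n : ℕ} (v : Fin n → ℝ) : 0 ≤ v ⬝ᵥ v :=
  Finset.sum_nonneg fun i _ => mul_self_nonneg (v i)

lemma euclNorm_smul {n : ℕ} (t : ℝ) (v : Fin n → ℝ) :
    euclNorm (t • v) = |t| * euclNorm v := by
  unfold euclNorm
  rw [smul_dotProduct, dotProduct_smul, smul_eq_mul, smul_eq_mul, ← mul_assoc,
    ← sq, Real.sqrt_mul (sq_nonneg t), Real.sqrt_sq_eq_abs]

lemma vecMulVec_mulVec' {n : ℕ} (u v w : Fin n → ℝ) :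
    (vecMulVec u v).mulVec w = (v ⬝ᵥ w) • u := by
  funext i
  simp [mulVec, vecMulVec_apply, dotProduct, Finset.mul_sum, Finset.sum_mul,
    mul_assoc, mul_comm, mul_left_comm]

/-- If `Ŷ = Xᵀy` and `Ẑ = Xᵀz` are linearly independent, then
`q₂ = (‖Ŷ‖Ẑ − ‖Ẑ‖Ŷ)/‖‖Ŷ‖Ẑ − ‖Ẑ‖Ŷ‖` is a unit eigenvector of
`A = ⟨y,z⟩ I − (ŶẐᵀ + ẐŶᵀ)/2` with eigenvalue
`s₂ = ⟨y,z⟩ + (‖Ŷ‖‖Ẑ‖ − ⟨Ŷ,Ẑ⟩)/2`. -/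
theorem q2_is_unit_eigenvector
    (N K : ℕ) (hN : 0 < N) (hK : 0 < K)
    (y z : Fin N → ℝ) (X : Matrix (Fin N) (Fin K) ℝ)
    (hX : Xᵀ * X = 1)
    (Yh Zh : Fin K → ℝ) (hYh : Yh = Xᵀ.mulVec y) (hZh : Zh = Xᵀ.mulVec z)
    (A : Matrix (Fin K) (Fin K) ℝ)
    (hA : A = (y ⬝ᵥ z) • (1 : Matrix (Fin K) (Fin K) ℝ) -
        (2⁻¹ : ℝ) • (vecMulVec Yh Zh + vecMulVec Zh Yh))
    (hli : LinearIndependent ℝ ![Yh, Zh])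
    (q2 : Fin K → ℝ)
    (hq2 : q2 = (euclNorm (euclNorm Yh • Zh - euclNorm Zh • Yh))⁻¹ •
        (euclNorm Yh • Zh - euclNorm Zh • Yh))
    (s2 : ℝ)
    (hs2 : s2 = y ⬝ᵥ z + (euclNorm Yh * euclNorm Zh - Yh ⬝ᵥ Zh) / 2) :
    euclNorm q2 = 1 ∧ A.mulVec q2 = s2 • q2 := by
  set a := euclNorm Yh with ha
  set b := euclNorm Zh with hb
  set w : Fin K → ℝ := a • Zh - b • Yh with hw
  -- Yh ≠ 0
  have hY0 : Yh ≠ 0 := by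
    have := hli.ne_zero 0
    simpa using this
  have ha2 : a ^ 2 = Yh ⬝ᵥ Yh := by
    rw [ha]; unfold euclNorm
    rw [Real.sq_sqrt (dotProduct_self_nonneg' Yh)]
  have hb2 : b ^ 2 = Zh ⬝ᵥ Zh := by
    rw [hb]; unfold euclNorm
    rw [Real.sq_sqrt (dotProduct_self_nonneg' Zh)]
  have hapos : 0 < a := by
    rw [ha]; unfold euclNorm
    apply Real.sqrt_pos.2
    rcases lt_or_eq_of_le (dotProduct_self_nonneg' Yh) with h | h
    · exact h
    · exact absurd ((dotProduct_self_eq_zero).1 h.symm) hY0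
  -- w ≠ 0
  have hw0 : w ≠ 0 := by
    intro h
    have : (-b) • Yh + a • Zh = 0 := by
      rw [hw] at h
      simpa [neg_smul, add_comm, sub_eq_add_neg] using h
    have := (LinearIndependent.pair_iff.1 hli (-b) a this).2
    exact absurd this hapos.ne'
  have hcpos : 0 < euclNorm w := by
    unfold euclNorm
    apply Real.sqrt_pos.2
    rcases lt_or_eq_of_le (dotProduct_self_nonneg' w) with h | h
    · exact h
    · exact absurd ((dotProduct_self_eq_zero).1 h.symm) hw0
  set c := euclNorm w with hc
  -- part 1
  have part1 : euclNorm q2 = 1 := by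
    rw [hq2, euclNorm_smul, abs_of_pos (inv_pos.2 hcpos), ← hc, inv_mul_cancel₀ hcpos.ne']
  refine ⟨part1, ?_⟩
  -- eigenvector on w
  have key : A.mulVec w = s2 • w := by
    rw [hA]
    rw [sub_mulVec, Matrix.smul_mulVec, Matrix.smul_mulVec, one_mulVec,
      add_mulVec, vecMulVec_mulVec', vecMulVec_mulVec']
    funext i
    have hZw : Zh ⬝ᵥ w = a * (b ^ 2) - b * (Yh ⬝ᵥ Zh) := by
      rw [hw, hb2, dotProduct_sub, dotProduct_smul, dotProduct_smul, smul_eq_mul,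
        smul_eq_mul, dotProduct_comm Zh Yh]
    have hYw : Yh ⬝ᵥ w = a * (Yh ⬝ᵥ Zh) - b * (a ^ 2) := by
      rw [hw, ha2, dotProduct_sub, dotProduct_smul, dotProduct_smul, smul_eq_mul, smul_eq_mul]
    rw [hZw, hYw]
    simp only [Pi.sub_apply, Pi.add_apply, Pi.smul_apply, smul_eq_mul, hZw, hYw, hs2, hw]
    ring
  rw [hq2, Matrix.mulVec_smul, key, smul_comm]
end

section
/- Assume Ŷ and Ẑ are linearly independent. Then A admits the spectral decomposition A = s₁ q₁ q₁ᵀ + s₂ q₂ q₂ᵀ + ⟨y, z⟩ (I_K − q₁ q₁ᵀ − q₂ q₂ᵀ), where q₁ = (‖Ŷ‖Ẑ + ‖Ẑ‖Ŷ)/‖‖Ŷ‖Ẑ + ‖Ẑ‖Ŷ‖, q₂ = (‖Ŷ‖Ẑ − ‖Ẑ‖Ŷ)/‖‖Ŷ‖Ẑ − ‖Ẑ‖Ŷ‖, s₁ = ⟨y, z⟩ − (‖Ŷ‖‖Ẑ‖ + ⟨Ŷ, Ẑ⟩)/2, and s₂ = ⟨y, z⟩ + (‖Ŷ‖‖Ẑ‖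 − ⟨Ŷ, Ẑ⟩)/2. -/
/-!
Write `a = ‖Ŷ‖`, `b = ‖Ẑ‖`, `u = a Ẑ + b Ŷ` and `v = a Ẑ - b Ŷ`. Polarization gives
`Ŷ Ẑᵀ + Ẑ Ŷᵀ = (u uᵀ - v vᵀ) / (2ab)`, while `‖u‖² = 2ab (ab + ⟨Ŷ, Ẑ⟩)` and
`‖v‖² = 2ab (ab - ⟨Ŷ, Ẑ⟩)`. Both are nonzero by the strict Cauchy–Schwarz inequality, so
`q₁ q₁ᵀ = u uᵀ / ‖u‖²` and `q₂ q₂ᵀ = v vᵀ / ‖v‖²`, and the claimed decomposition is an identity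
between scalar multiples of `1`, `u uᵀ` and `v vᵀ`.
-/

open Matrix

lemma euclNorm_sq {n : ℕ} (v : Fin n → ℝ) : euclNorm v ^ 2 = v ⬝ᵥ v :=
  Real.sq_sqrt (Fintype.sum_nonneg fun i => mul_self_nonneg (v i))

lemma dotProduct_self_pos {m R : Type*} [Fintype m] [Ring R] [LinearOrder R]
    [IsStrictOrderedRing R] {v : m → R} (hv : v ≠ 0) : 0 < v ⬝ᵥ v :=
  (Fintype.sum_nonneg fun i => mul_self_nonneg (v i)).lt_of_ne' (dotProduct_self_eq_zero.not.mpr hv)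

lemma euclNorm_pos {n : ℕ} {v : Fin n → ℝ} (hv : v ≠ 0) : 0 < euclNorm v :=
  Real.sqrt_pos.mpr (dotProduct_self_pos hv)

lemma vecMulVec_inv_euclNorm_smul_self {n : ℕ} (v : Fin n → ℝ) :
    vecMulVec ((euclNorm v)⁻¹ • v) ((euclNorm v)⁻¹ • v) = (v ⬝ᵥ v)⁻¹ • vecMulVec v v := by
  rw [smul_vecMulVec, vecMulVec_smul, smul_smul, ← mul_inv, ← sq, euclNorm_sq]

lemma vecMulVec_add_self_sub_vecMulVec_sub_self {m α : Type*} [CommRing α] (p q : m → α) :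
    vecMulVec (p + q) (p + q) - vecMulVec (p - q) (p - q) =
      (2 : α) • (vecMulVec p q + vecMulVec q p) := by
  ext i j
  simp only [Matrix.sub_apply, Matrix.add_apply, Matrix.smul_apply, vecMulVec_apply,
    Pi.add_apply, Pi.sub_apply, smul_eq_mul]
  ring

lemma vecMulVec_add_vecMulVec_eq_inv_smul_sub {m α : Type*} [Field α] [NeZero (2 : α)]
    (Y Z : m → α) {a b : α} (ha : a ≠ 0) (hb : b ≠ 0) :
    vecMulVec Y Z + vecMulVec Z Y = (2 * a * b)⁻¹ •
      (vecMulVec (a • Z + b • Y) (a • Z + b • Y) - vecMulVec (a • Z - b • Y) (a • Z - b • Y)) := by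
  rw [vecMulVec_add_self_sub_vecMulVec_sub_self, smul_vecMulVec, vecMulVec_smul, smul_vecMulVec,
    vecMulVec_smul]
  match_scalars <;> field_simp

section

variable {n : ℕ} (Y Z : Fin n → ℝ)

lemma dotProduct_self_euclNorm_smul_add :
    (euclNorm Y • Z + euclNorm Z • Y) ⬝ᵥ (euclNorm Y • Z + euclNorm Z • Y) =
      2 * euclNorm Y * euclNorm Z * (euclNorm Y * euclNorm Z + Y ⬝ᵥ Z) := by
  simp only [add_dotProduct, dotProduct_add, smul_dotProduct, dotProduct_smul, smul_eq_mul,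
    ← euclNorm_sq, dotProduct_comm Z Y]
  ring

lemma dotProduct_self_euclNorm_smul_sub :
    (euclNorm Y • Z - euclNorm Z • Y) ⬝ᵥ (euclNorm Y • Z - euclNorm Z • Y) =
      2 * euclNorm Y * euclNorm Z * (euclNorm Y * euclNorm Z - Y ⬝ᵥ Z) := by
  simp only [sub_dotProduct, dotProduct_sub, smul_dotProduct, dotProduct_smul, smul_eq_mul,
    ← euclNorm_sq, dotProduct_comm Z Y]
  ring

lemma abs_dotProduct_lt_euclNorm_mul_euclNorm (hli : LinearIndependent ℝ ![Y, Z]) :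
    |Y ⬝ᵥ Z| < euclNorm Y * euclNorm Z := by
  have hZ := euclNorm_pos (hli.ne_zero 1)
  have hab : 0 < 2 * euclNorm Y * euclNorm Z := by
    have := euclNorm_pos (hli.ne_zero 0)
    positivity
  have hu : euclNorm Y • Z + euclNorm Z • Y ≠ 0 := fun h =>
    hZ.ne' (LinearIndependent.pair_iff.mp hli _ _ (by rwa [add_comm] at h)).1
  have hv : euclNorm Y • Z - euclNorm Z • Y ≠ 0 := fun h =>
    hZ.ne' <| neg_eq_zero.mp
      (LinearIndependent.pair_iff.mp hli (-euclNorm Z) _ (by rwa [neg_smul, neg_add_eq_sub])).1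
  have hpos := (mul_pos_iff_of_pos_left hab).mp
    (dotProduct_self_euclNorm_smul_add Y Z ▸ dotProduct_self_pos hu)
  have hneg := (mul_pos_iff_of_pos_left hab).mp
    (dotProduct_self_euclNorm_smul_sub Y Z ▸ dotProduct_self_pos hv)
  exact abs_lt.mpr ⟨by linarith, by linarith⟩

end

theorem spectral_decomposition_of_A_general
    (N K : ℕ)
    (y z : Fin N → ℝ)
    (Yh Zh : Fin K → ℝ)
    (A : Matrix (Fin K) (Fin K) ℝ)
    (hA : A = (y ⬝ᵥ z) • (1 : Matrix (Fin K) (Fin K) ℝ) -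
        (2⁻¹ : ℝ) • (vecMulVec Yh Zh + vecMulVec Zh Yh))
    (hli : LinearIndependent ℝ ![Yh, Zh])
    (q1 q2 : Fin K → ℝ)
    (hq1 : q1 = (euclNorm (euclNorm Yh • Zh + euclNorm Zh • Yh))⁻¹ •
        (euclNorm Yh • Zh + euclNorm Zh • Yh))
    (hq2 : q2 = (euclNorm (euclNorm Yh • Zh - euclNorm Zh • Yh))⁻¹ •
        (euclNorm Yh • Zh - euclNorm Zh • Yh))
    (s1 s2 : ℝ)
    (hs1 : s1 = y ⬝ᵥ z - (euclNorm Yh * euclNorm Zh + Yh ⬝ᵥ Zh) / 2)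
    (hs2 : s2 = y ⬝ᵥ z + (euclNorm Yh * euclNorm Zh - Yh ⬝ᵥ Zh) / 2) :
    A = s1 • vecMulVec q1 q1 + s2 • vecMulVec q2 q2 +
        (y ⬝ᵥ z) • ((1 : Matrix (Fin K) (Fin K) ℝ) - vecMulVec q1 q1 - vecMulVec q2 q2) := by
  subst hA hq1 hq2 hs1 hs2
  have hY : euclNorm Yh ≠ 0 := (euclNorm_pos (hli.ne_zero 0)).ne'
  have hZ : euclNorm Zh ≠ 0 := (euclNorm_pos (hli.ne_zero 1)).ne'
  obtain ⟨hlt, hgt⟩ := abs_lt.mp (abs_dotProduct_lt_euclNorm_mul_euclNorm Yh Zh hli)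
  have hadd : euclNorm Yh * euclNorm Zh + Yh ⬝ᵥ Zh ≠ 0 := (neg_lt_iff_pos_add'.mp hlt).ne'
  have hsub : euclNorm Yh * euclNorm Zh - Yh ⬝ᵥ Zh ≠ 0 := sub_ne_zero.mpr hgt.ne'
  rw [vecMulVec_add_vecMulVec_eq_inv_smul_sub Yh Zh hY hZ, vecMulVec_inv_euclNorm_smul_self,
    vecMulVec_inv_euclNorm_smul_self, dotProduct_self_euclNorm_smul_add, dotProduct_self_euclNorm_smul_sub]
  match_scalars <;> field_simp <;> ring

/-- Spectral decomposition of `A = ⟨y,z⟩ I − (ŶẐᵀ + ẐŶᵀ)/2` when `Ŷ = Xᵀy` and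
`Ẑ = Xᵀz` are linearly independent:
`A = s₁ q₁q₁ᵀ + s₂ q₂q₂ᵀ + ⟨y,z⟩ (I − q₁q₁ᵀ − q₂q₂ᵀ)`. -/
theorem spectral_decomposition_of_A
    (N K : ℕ) (hN : 0 < N) (hK : 0 < K)
    (y z : Fin N → ℝ) (X : Matrix (Fin N) (Fin K) ℝ)
    (hX : Xᵀ * X = 1)
    (Yh Zh : Fin K → ℝ) (hYh : Yh = Xᵀ.mulVec y) (hZh : Zh = Xᵀ.mulVec z)
    (A : Matrix (Fin K) (Fin K) ℝ)
    (hA : A = (y ⬝ᵥ z) • (1 : Matrix (Fin K) (Fin K) ℝ) -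
        (2⁻¹ : ℝ) • (vecMulVec Yh Zh + vecMulVec Zh Yh))
    (hli : LinearIndependent ℝ ![Yh, Zh])
    (q1 q2 : Fin K → ℝ)
    (hq1 : q1 = (euclNorm (euclNorm Yh • Zh + euclNorm Zh • Yh))⁻¹ •
        (euclNorm Yh • Zh + euclNorm Zh • Yh))
    (hq2 : q2 = (euclNorm (euclNorm Yh • Zh - euclNorm Zh • Yh))⁻¹ •
        (euclNorm Yh • Zh - euclNorm Zh • Yh))
    (s1 s2 : ℝ)
    (hs1 : s1 = y ⬝ᵥ z - (euclNorm Yh * euclNorm Zh + Yh ⬝ᵥ Zh) / 2)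
    (hs2 : s2 = y ⬝ᵥ z + (euclNorm Yh * euclNorm Zh - Yh ⬝ᵥ Zh) / 2) :
    A = s1 • vecMulVec q1 q1 + s2 • vecMulVec q2 q2 +
        (y ⬝ᵥ z) • ((1 : Matrix (Fin K) (Fin K) ℝ) - vecMulVec q1 q1 - vecMulVec q2 q2) :=
  spectral_decomposition_of_A_general N K y z Yh Zh A hA hli q1 q2 hq1 hq2 s1 s2 hs1 hs2
end
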